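/- arXiv:2212.02943 — 4 statements merged into one kernel-verified Lean document; each statement's English description precedes it below -/
import Mathlib

section
/- For the symmetric group S_4, d(S_4) = 2 and m(S_4) = 3; in particular m(S_4) = d(S_4) + 1. -/
def IndepGen {G : Type*} [Group G] (S : Set G) : Prop :=
  Subgroup.closure S = ⊤ ∧ ∀ s ∈ S, Subgroup.closure (S \ {s}) < ⊤

noncomputable def mGen (G : Type*) [Group G] : ℕ :=
  sSup {n | ∃ S : Finset G, IndepGen (S : Set G) ∧ S.card = n}

open Equiv Subgroup

/-! If `S = {s₁, …, sₖ}` is an independent generating set, then along any ordering the subgroups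
`⟨s₁⟩ < ⟨s₁, s₂⟩ < ⋯ < ⟨s₁, …, sₖ⟩ = G` increase strictly, so each step at least doubles the order
and `2 ^ k ≤ |G|`; for `S₄` this gives `k ≤ 4`. If `k = 4`, each triple of `S` generates a proper
subgroup of order at least `8` dividing `24`, hence of order `8` or `12`. Two triples cannot both
generate `A₄`, the only subgroup of order `12`, since together they contain `S`. A triple generating
a group of order `8 = 2³` makes every step of every chain a doubling: its elements are involutions
and any two of them generate a group of order `4`, so they commute; but `S₄` has no three
independent commuting involutions. Conversely the three adjacent transpositions are independent, and
`S₄` is `2`-generated but not cyclic. -/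

theorem Subgroup.two_mul_card_le_card_of_lt {G : Type*} [Group G] [Finite G]
    {H K : Subgroup G} (h : H < K) : 2 * Nat.card H ≤ Nat.card K := by
  obtain ⟨m, hm⟩ := card_dvd_of_le h.le
  have hm0 : m ≠ 0 := by rintro rfl; exact Nat.card_pos.ne' (hm.trans (mul_zero _))
  have hm1 : m ≠ 1 := by
    rintro rfl
    exact h.ne (eq_of_le_of_card_ge h.le (by rw [hm, mul_one]))
  rw [hm, mul_comm 2]
  exact Nat.mul_le_mul_left _ (by omega)

theorem Subgroup.closure_lt_top_of_subset {G : Type*} [Group G] {T : Set G} {H : Subgroup G}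
    (hT : T ⊆ H) {g : G} (hg : g ∉ H) : closure T < ⊤ :=
  ((closure_le H).2 hT).trans_lt (lt_top_iff_ne_top.2 fun e => hg (e ▸ mem_top g))

theorem Group.two_le_rank_of_not_commute {G : Type*} [Group G] [Group.FG G] {a b : G}
    (h : ¬Commute a b) : 2 ≤ Group.rank G := by
  obtain ⟨S, hcard, hS⟩ := Group.rank_spec G
  by_contra! hlt
  obtain ⟨g, hg⟩ := Finset.card_le_one_iff_subset_singleton.mp (hcard ▸ Nat.lt_succ_iff.mp hlt)
  have hcyc : zpowers g = ⊤ := by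
    rw [eq_top_iff, ← hS, zpowers_eq_closure]
    exact closure_mono (by simpa using Finset.coe_subset.mpr hg)
  obtain ⟨m, rfl⟩ := mem_zpowers_iff.mp (hcyc ▸ mem_top a)
  obtain ⟨n, rfl⟩ := mem_zpowers_iff.mp (hcyc ▸ mem_top b)
  exact h ((Commute.refl g).zpow_zpow m n)

namespace IndepGen

variable {G : Type*} [Group G] {S T : Finset G} {s : G}

theorem notMem_closure_sdiff_singleton (hS : IndepGen (S : Set G)) (hs : s ∈ S) :
    s ∉ closure ((S : Set G) \ {s}) := by
  intro hmem
  refine (hS.2 s hs).ne (top_le_iff.mp (hS.1 ▸ (closure_le _).2 fun t ht => ?_))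
  by_cases hts : t = s
  · exact hts ▸ hmem
  · exact subset_closure ⟨ht, hts⟩

theorem notMem_closure (hS : IndepGen (S : Set G)) (hT : T ⊆ S) (hs : s ∈ S) (hsT : s ∉ T) :
    s ∉ closure (T : Set G) := fun hmem =>
  hS.notMem_closure_sdiff_singleton hs <| Subgroup.closure_mono
    (Set.subset_sdiff_singleton (Finset.coe_subset.mpr hT) (by simpa using hsT)) hmem

theorem closure_lt_closure_insert (hS : IndepGen (S : Set G)) (hT : T ⊆ S) (hs : s ∈ S)
    (hsT : s ∉ T) : closure (T : Set G) < closure (insert s (T : Set G)) :=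
  (Subgroup.closure_mono (Set.subset_insert _ _)).lt_of_ne fun e =>
    hS.notMem_closure hT hs hsT (e ▸ subset_closure (Set.mem_insert _ _))

theorem closure_lt_top (hS : IndepGen (S : Set G)) (hT : T ⊆ S) (hs : s ∈ S) (hsT : s ∉ T) :
    closure (T : Set G) < ⊤ :=
  (Subgroup.closure_mono (Set.subset_sdiff_singleton (Finset.coe_subset.mpr hT)
    (by simpa using hsT))).trans_lt (hS.2 s hs)

variable [Finite G]

theorem two_pow_card_sub_mul_card_closure_le (hS : IndepGen (S : Set G)) {U : Finset G}
    (hUT : U ⊆ T) (hT : T ⊆ S) :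
    2 ^ (T.card - U.card) * Nat.card (closure (U : Set G)) ≤ Nat.card (closure (T : Set G)) := by
  classical
  induction hk : T.card - U.card generalizing T with
  | zero =>
    rw [← Finset.eq_of_subset_of_card_le hUT (by omega)]
    simp
  | succ k ih =>
    obtain ⟨s, hsT, hsU⟩ : ∃ s ∈ T, s ∉ U :=
      Finset.exists_of_ssubset (hUT.ssubset_of_ne (by rintro rfl; simp at hk))
    have hT' : T.erase s ⊆ S := (T.erase_subset s).trans hT
    have hUT' : U ⊆ T.erase s := fun u hu =>
      Finset.mem_erase.mpr ⟨fun e => hsU (e ▸ hu), hUT hu⟩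
    have hk' : (T.erase s).card - U.card = k := by
      rw [Finset.card_erase_of_mem hsT]; omega
    have hlt := hS.closure_lt_closure_insert hT' (hT hsT) (T.notMem_erase s)
    rw [← Finset.coe_insert, Finset.insert_erase hsT] at hlt
    calc 2 ^ (k + 1) * Nat.card (closure (U : Set G))
        = 2 * (2 ^ k * Nat.card (closure (U : Set G))) := by ring
      _ ≤ 2 * Nat.card (closure (T.erase s : Set G)) :=
        Nat.mul_le_mul_left 2 (ih hUT' hT' hk')
      _ ≤ Nat.card (closure (T : Set G)) := two_mul_card_le_card_of_lt hlt

theorem two_pow_card_le_card_closure (hS : IndepGen (S : Set G)) (hT : T ⊆ S) :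
    2 ^ T.card ≤ Nat.card (closure (T : Set G)) := by
  simpa using hS.two_pow_card_sub_mul_card_closure_le T.empty_subset hT

theorem two_pow_card_le (hS : IndepGen (S : Set G)) : 2 ^ S.card ≤ Nat.card G := by
  simpa [hS.1] using hS.two_pow_card_le_card_closure subset_rfl

theorem card_closure_eq_two_pow_of_subset (hS : IndepGen (S : Set G)) {U : Finset G}
    (hUT : U ⊆ T) (hT : T ⊆ S) (h : Nat.card (closure (T : Set G)) = 2 ^ T.card) :
    Nat.card (closure (U : Set G)) = 2 ^ U.card := by
  have hle := hS.two_pow_card_sub_mul_card_closure_le hUT hT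
  rw [h, ← Nat.sub_add_cancel (Finset.card_le_card hUT), pow_add, Nat.add_sub_cancel] at hle
  exact le_antisymm (Nat.le_of_mul_le_mul_left hle (by positivity))
    (hS.two_pow_card_le_card_closure (hUT.trans hT))

theorem mul_self_eq_one_of_card_closure_eq_two_pow (hS : IndepGen (S : Set G)) (hT : T ⊆ S)
    (h : Nat.card (closure (T : Set G)) = 2 ^ T.card) {x : G} (hx : x ∈ T) : x * x = 1 := by
  have hx2 := hS.card_closure_eq_two_pow_of_subset (Finset.singleton_subset_iff.mpr hx) hT h
  rw [Finset.coe_singleton, ← zpowers_eq_closure, Nat.card_zpowers, Finset.card_singleton,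
    pow_one] at hx2
  rw [← sq, ← hx2, pow_orderOf_eq_one]

theorem commute_of_card_closure_eq_two_pow (hS : IndepGen (S : Set G)) (hT : T ⊆ S)
    (h : Nat.card (closure (T : Set G)) = 2 ^ T.card) {x y : G} (hx : x ∈ T) (hy : y ∈ T) :
    Commute x y := by
  classical
  obtain rfl | hxy := eq_or_ne x y
  · exact Commute.refl x
  have hU : ({x, y} : Finset G) ⊆ T := Finset.insert_subset hx (Finset.singleton_subset_iff.mpr hy)
  have h4 := hS.card_closure_eq_two_pow_of_subset hU hT h
  rw [Finset.card_pair hxy] at h4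
  have := IsPGroup.isMulCommutative_of_card_eq_prime_sq (p := 2) h4
  exact congrArg Subtype.val (this.is_comm.comm ⟨x, subset_closure (by simp)⟩
    ⟨y, subset_closure (by simp)⟩)

end IndepGen

namespace Equiv.Perm

theorem card_fin_four : Nat.card (Perm (Fin 4)) = 24 := by
  rw [Nat.card_perm, Nat.card_eq_fintype_card, Fintype.card_fin]
  rfl

theorem eq_alternatingGroup_of_card_eq_twelve {H : Subgroup (Perm (Fin 4))}
    (h : Nat.card H = 12) : H = alternatingGroup (Fin 4) := by
  refine eq_alternatingGroup_of_index_eq_two ?_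
  have := H.card_mul_index
  rw [h, card_fin_four] at this
  omega

set_option synthInstance.maxSize 2048 in
theorem fin_four_commuting_involutions_dependent : ∀ x y z : Perm (Fin 4),
    x * x = 1 → y * y = 1 → z * z = 1 → x * y = y * x → x * z = z * x → y * z = z * y →
    x = 1 ∨ y ∈ ({1, x} : Finset _) ∨ z ∈ ({1, x, y, x * y} : Finset _) := by
  decide

theorem rank_fin_four : Group.rank (Perm (Fin 4)) = 2 := by
  refine le_antisymm ?_ (Group.two_le_rank_of_not_commute (a := swap 0 1) (b := swap 1 2)
    fun h => absurd h.eq (by decide))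
  refine (Group.rank_le (S := {finRotate 4, swap 0 (finRotate 4 0)}) ?_).trans (Finset.card_le_two)
  rw [Finset.coe_pair]
  exact closure_cycle_adjacent_swap isCycle_finRotate support_finRotate 0

theorem exists_indepGen_card_three :
    ∃ S : Finset (Perm (Fin 4)), IndepGen (S : Set (Perm (Fin 4))) ∧ S.card = 3 := by
  refine ⟨{swap 0 1, swap 1 2, swap 2 3}, ⟨?_, ?_⟩, rfl⟩
  · have hrange : Set.range (fun i : Fin 3 => swap i.castSucc i.succ) =
        (({swap 0 1, swap 1 2, swap 2 3} : Finset (Perm (Fin 4))) : Set (Perm (Fin 4))) := by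
      ext σ
      simp [Fin.exists_fin_succ, eq_comm]
    exact hrange ▸ closure_eq_top_of_mclosure_eq_top (mclosure_swap_castSucc_succ 3)
  · intro s hs
    simp only [Finset.coe_insert, Finset.coe_singleton, Set.mem_insert_iff,
      Set.mem_singleton_iff] at hs
    rcases hs with rfl | rfl | rfl
    · refine closure_lt_top_of_subset (H := MulAction.stabilizer _ (0 : Fin 4)) (g := swap 0 1)
        ?_ ?_ <;> simp +decide [Set.subset_def, MulAction.mem_stabilizer_iff]
    · refine closure_lt_top_of_subset (H := centralizer {swap 0 1}) (g := swap 1 2)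
        ?_ ?_ <;> simp +decide [Set.subset_def, mem_centralizer_singleton_iff]
    · refine closure_lt_top_of_subset (H := MulAction.stabilizer _ (3 : Fin 4)) (g := swap 2 3)
        ?_ ?_ <;> simp +decide [Set.subset_def, MulAction.mem_stabilizer_iff]

variable {S T : Finset (Perm (Fin 4))}

theorem card_closure_ne_eight_of_indepGen (hS : IndepGen (S : Set (Perm (Fin 4)))) (hT : T ⊆ S)
    (h3 : T.card = 3) : Nat.card (closure (T : Set (Perm (Fin 4)))) ≠ 8 := by
  intro h8
  replace h8 : Nat.card (closure (T : Set (Perm (Fin 4)))) = 2 ^ T.card := by rw [h8, h3]; rfl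
  obtain ⟨x, y, z, hxy, hxz, hyz, rfl⟩ := Finset.card_eq_three.mp h3
  have hx : x ∈ ({x, y, z} : Finset _) := by simp
  have hy : y ∈ ({x, y, z} : Finset _) := by simp
  have hz : z ∈ ({x, y, z} : Finset _) := by simp
  have hinv := fun {w} (hw : w ∈ ({x, y, z} : Finset _)) =>
    hS.mul_self_eq_one_of_card_closure_eq_two_pow hT h8 hw
  have hcomm := fun {v w} (hv : v ∈ ({x, y, z} : Finset _)) (hw : w ∈ ({x, y, z} : Finset _)) =>
    (hS.commute_of_card_closure_eq_two_pow hT h8 hv hw).eq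
  rcases fin_four_commuting_involutions_dependent x y z (hinv hx) (hinv hy) (hinv hz)
    (hcomm hx hy) (hcomm hx hz) (hcomm hy hz) with hx1 | hyx | hzxy
  · exact hS.notMem_closure (Finset.empty_subset S) (hT hx) (Finset.notMem_empty x)
      (hx1 ▸ one_mem _)
  · refine hS.notMem_closure (T := {x}) (by simpa using hT hx) (hT hy) (by simpa using hxy.symm) ?_
    simp only [Finset.mem_insert, Finset.mem_singleton] at hyx
    rcases hyx with rfl | rfl
    exacts [one_mem _, subset_closure (by simp)]
  · refine hS.notMem_closure (T := {x, y}) (Finset.insert_subset (hT hx) (by simpa using hT hy))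
      (hT hz) (by simp [hxz.symm, hyz.symm]) ?_
    simp only [Finset.mem_insert, Finset.mem_singleton] at hzxy
    rcases hzxy with rfl | rfl | rfl | rfl
    exacts [one_mem _, subset_closure (by simp), subset_closure (by simp),
      mul_mem (subset_closure (by simp)) (subset_closure (by simp))]

theorem card_closure_eq_twelve_of_indepGen (hS : IndepGen (S : Set (Perm (Fin 4)))) (hT : T ⊆ S)
    (h3 : T.card = 3) {s : Perm (Fin 4)} (hs : s ∈ S) (hsT : s ∉ T) :
    Nat.card (closure (T : Set (Perm (Fin 4)))) = 12 := by
  have hlo : 8 ≤ Nat.card (closure (T : Set (Perm (Fin 4)))) := by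
    simpa [h3] using hS.two_pow_card_le_card_closure hT
  have hhi := two_mul_card_le_card_of_lt (hS.closure_lt_top hT hs hsT)
  have hdvd := card_dvd_of_le (le_top : closure (T : Set (Perm (Fin 4))) ≤ ⊤)
  rw [card_top, card_fin_four] at hhi hdvd
  replace hhi : Nat.card (closure (T : Set (Perm (Fin 4)))) ≤ 12 := by omega
  have hne := card_closure_ne_eight_of_indepGen hS hT h3
  interval_cases Nat.card (closure (T : Set (Perm (Fin 4)))) <;> simp_all

theorem card_le_three_of_indepGen (hS : IndepGen (S : Set (Perm (Fin 4)))) : S.card ≤ 3 := by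
  have h4 : S.card ≤ 4 := by
    have h := hS.two_pow_card_le
    rw [card_fin_four] at h
    by_contra! h5
    have := Nat.pow_le_pow_right two_pos h5
    omega
  by_contra! h3
  obtain ⟨a, ha, b, hb, hab⟩ := Finset.one_lt_card.mp (by omega : 1 < S.card)
  have hA : ∀ c ∈ S, closure (S.erase c : Set (Perm (Fin 4))) = alternatingGroup (Fin 4) :=
    fun c hc => eq_alternatingGroup_of_card_eq_twelve <|
      card_closure_eq_twelve_of_indepGen hS (S.erase_subset c)
        (by rw [Finset.card_erase_of_mem hc]; omega) hc (S.notMem_erase c)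
  have hSA : (S : Set (Perm (Fin 4))) ⊆ alternatingGroup (Fin 4) := fun s hs => by
    obtain rfl | hsa := eq_or_ne s a
    · exact hA b hb ▸ subset_closure (Finset.mem_erase.mpr ⟨hab, hs⟩)
    · exact hA a ha ▸ subset_closure (Finset.mem_erase.mpr ⟨hsa, hs⟩)
  have htop := (closure_le _).2 hSA
  rw [hS.1, top_le_iff] at htop
  have := alternatingGroup.index_eq_two (α := Fin 4)
  rw [htop, index_top] at this
  omega

end Equiv.Perm

theorem sym4_d_and_m :
    Group.rank (Equiv.Perm (Fin 4)) = 2 ∧ mGen (Equiv.Perm (Fin 4)) = 3 := by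
  refine ⟨Perm.rank_fin_four, IsGreatest.csSup_eq ⟨Perm.exists_indepGen_card_three, ?_⟩⟩
  rintro n ⟨S, hS, rfl⟩
  exact Perm.card_le_three_of_indepGen hS
end

section
/- Let G be a finite solvable group. Then m(G) equals the number of non-Frattini chief factors in a chief series of G. -/
/-- A chief factor `X/Y` (with `Y ≤ X` normal subgroups of `G`) is Frattini iff
`X/Y ≤ Frat(G/Y)`, equivalently `X` is contained in every maximal subgroup of `G`
containing `Y`. -/
def IsFrattiniFactor {G : Type*} [Group G] (Y X : Subgroup G) : Prop :=
  ∀ M : Subgroup G, IsCoatom M → Y ≤ M → X ≤ M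

/-!
Induct along the chief series. Its first term `N` is a minimal normal subgroup, and the chief
factors of `G ⧸ N` are the remaining factors of `G`, with the same Frattini status.

If `N ≤ Φ(G)`, a set generates `G` iff it generates `G` modulo `N`, so independent generating
sets of `G` and of `G ⧸ N` correspond and `m(G) = m(G ⧸ N)`.

Otherwise some maximal subgroup `M` misses `N`. As `G` is solvable, `N` is abelian, so `M ⊓ N` is
normal, hence trivial: `M` complements `N`. Lifting an independent generating set of `G ⧸ N`
into `M` and adding one element of `N \ M` gives `m(G) ≥ m(G ⧸ N) + 1`. Conversely, an
independent generating set of `G` either stays independent modulo `N`, or some `S \ {s}`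
generates a complement of `N` and is then independent modulo `N`; so `m(G) ≤ m(G ⧸ N) + 1`.
-/

open Subgroup

section IndependentGenerators

variable {G : Type*} [Group G]

lemma bddAbove_card_indepGen [Finite G] :
    BddAbove {n | ∃ S : Finset G, IndepGen (S : Set G) ∧ S.card = n} := by
  have : Fintype G := .ofFinite G
  refine ⟨Fintype.card G, ?_⟩
  rintro _ ⟨S, -, rfl⟩
  exact S.card_le_univ

lemma le_mGen [Finite G] {S : Finset G} (hS : IndepGen (S : Set G)) : S.card ≤ mGen G :=
  le_csSup bddAbove_card_indepGen ⟨S, hS, rfl⟩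

lemma mGen_le {k : ℕ} (h : ∀ S : Finset G, IndepGen (S : Set G) → S.card ≤ k) : mGen G ≤ k := by
  refine csSup_le' ?_
  rintro _ ⟨S, hS, rfl⟩
  exact h S hS

lemma exists_indepGen [Finite G] : ∃ S : Finset G, IndepGen (S : Set G) := by
  classical
  have : Fintype G := .ofFinite G
  obtain ⟨S, hS, hmin⟩ := Set.exists_min_image {S : Finset G | closure (S : Set G) = ⊤}
    Finset.card (Set.toFinite _) ⟨.univ, by simp⟩
  refine ⟨S, hS, fun s hs => lt_top_iff_ne_top.mpr fun htop => ?_⟩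
  have := hmin (S.erase s) (by simpa using htop)
  exact (Finset.card_erase_lt_of_mem hs).not_ge this

lemma exists_indepGen_card_eq_mGen [Finite G] :
    ∃ S : Finset G, IndepGen (S : Set G) ∧ S.card = mGen G := by
  obtain ⟨S, hS⟩ := exists_indepGen (G := G)
  exact Nat.sSup_mem (s := {n | ∃ S : Finset G, IndepGen (S : Set G) ∧ S.card = n})
    ⟨S.card, S, hS, rfl⟩ bddAbove_card_indepGen

lemma mGen_eq_zero_of_bot_eq_top (h : (⊥ : Subgroup G) = ⊤) : mGen G = 0 :=
  Nat.le_zero.mp <| mGen_le fun _ hS => (Finset.card_eq_zero.mpr <|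
    Finset.eq_empty_of_forall_notMem fun s hs => not_lt_bot (h ▸ hS.2 s hs)).le

end IndependentGenerators

section Quotient

variable {G H : Type*} [Group G] [Group H] {φ : G →* H}

lemma map_eq_top_iff_sup_ker_eq_top (hφ : Function.Surjective φ) {K : Subgroup G} :
    K.map φ = ⊤ ↔ K ⊔ φ.ker = ⊤ := by
  rw [← comap_map_eq, ← (comap_injective hφ).eq_iff, comap_top]

/-- `T` maps injectively onto an independent generating set of `H`. -/
lemma card_le_mGen_of_surjective [Finite H] (hφ : Function.Surjective φ) {T : Finset G}
    (hgen : closure (T : Set G) ⊔ φ.ker = ⊤)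
    (hind : ∀ t ∈ T, closure ((T : Set G) \ {t}) ⊔ φ.ker ≠ ⊤) :
    T.card ≤ mGen H := by
  classical
  have hmap : ∀ S : Set G, closure (φ '' S) = ⊤ ↔ closure S ⊔ φ.ker = ⊤ := fun S => by
    rw [← MonoidHom.map_closure, map_eq_top_iff_sup_ker_eq_top hφ]
  have hinj : Set.InjOn φ T := by
    intro t ht t' ht' heq
    by_contra hne
    refine hind t ht ((hmap _).mp (top_unique ?_))
    rw [← (hmap T).mpr hgen]
    refine closure_mono ?_
    rintro _ ⟨u, hu, rfl⟩
    by_cases hut : u = t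
    · exact ⟨t', ⟨ht', Ne.symm hne⟩, hut ▸ heq.symm⟩
    · exact ⟨u, ⟨hu, hut⟩, rfl⟩
  rw [← Finset.card_image_of_injOn hinj]
  refine le_mGen ⟨by simpa [hmap] using hgen, ?_⟩
  simp only [Finset.coe_image, Set.forall_mem_image]
  intro t ht
  refine lt_of_le_of_lt (closure_mono ?_) (lt_top_iff_ne_top.mpr ((hmap _).not.mpr (hind t ht)))
  rintro _ ⟨⟨u, hu, rfl⟩, hut⟩
  exact ⟨u, ⟨hu, fun h => hut (congrArg φ h)⟩, rfl⟩

lemma IndepGen.image_section_union {σ : H → G} (hσ : ∀ h, φ (σ h) = h) {T : Set H}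
    (hT : IndepGen T) {X : Set G} (hX : X ⊆ φ.ker) (hgen : closure (σ '' T ∪ X) = ⊤)
    (hXind : ∀ x ∈ X, closure ((σ '' T ∪ X) \ {x}) < ⊤) : IndepGen (σ '' T ∪ X) := by
  refine ⟨hgen, ?_⟩
  rintro _ (⟨t, ht, rfl⟩ | hx)
  · have hφ : Function.Surjective φ := fun h => ⟨σ h, hσ h⟩
    calc closure ((σ '' T ∪ X) \ {σ t}) ≤ (closure (T \ {t})).comap φ := by
          rw [closure_le]
          rintro _ ⟨⟨u, hu, rfl⟩ | hx, hne⟩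
          · refine mem_comap.mpr (subset_closure ?_)
            rw [hσ]
            exact ⟨hu, fun hut => hne (congrArg σ hut)⟩
          · exact (mem_comap.mpr ((hX hx : φ _ = 1) ▸ one_mem _))
      _ < ⊤ := by
          rw [← comap_top φ]
          exact (comap_lt_comap_of_surjective hφ).mpr (hT.2 t ht)
  · exact hXind _ hx

lemma closure_image_section_sup_ker_eq_top {σ : H → G} (hσ : ∀ h, φ (σ h) = h) {T : Set H}
    (hT : closure T = ⊤) : closure (σ '' T) ⊔ φ.ker = ⊤ := by
  rw [← map_eq_top_iff_sup_ker_eq_top fun h => ⟨σ h, hσ h⟩, MonoidHom.map_closure,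
    Set.image_image]
  simpa only [hσ, Set.image_id'] using hT

lemma isCoatom_comap_iff_of_surjective (hφ : Function.Surjective φ) {K : Subgroup H} :
    IsCoatom (K.comap φ) ↔ IsCoatom K := by
  refine ⟨fun h => ⟨fun hK => h.1 (hK ▸ comap_top φ), fun L hKL => comap_injective hφ ?_⟩,
    isCoatom_comap_of_surjective hφ⟩
  rw [comap_top]
  exact h.2 _ ((comap_lt_comap_of_surjective hφ).mpr hKL)

lemma isFrattiniFactor_map_iff (hφ : Function.Surjective φ) {Y X : Subgroup G}
    (hY : φ.ker ≤ Y) : IsFrattiniFactor (Y.map φ) (X.map φ) ↔ IsFrattiniFactor Y X := by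
  constructor
  · intro h M hM hYM
    rw [← comap_map_eq_self (hY.trans hYM)] at hM ⊢
    rw [← map_le_iff_le_comap]
    exact h _ ((isCoatom_comap_iff_of_surjective hφ).mp hM) (map_mono hYM)
  · intro h M hM hYM
    rw [map_le_iff_le_comap] at hYM ⊢
    exact h _ (isCoatom_comap_of_surjective hφ hM) hYM

end Quotient

section Frattini

variable {G : Type*} [Group G]

lemma isFrattiniFactor_bot_iff {N : Subgroup G} : IsFrattiniFactor ⊥ N ↔ N ≤ frattini G := by
  simp [IsFrattiniFactor, frattini, Order.radical]

lemma mGen_quotient_eq_of_le_frattini [Finite G] {N : Subgroup G} [N.Normal]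
    (hN : N ≤ frattini G) : mGen (G ⧸ N) = mGen G := by
  classical
  have hπ := QuotientGroup.mk'_surjective N
  have hker := QuotientGroup.ker_mk' N
  have hnongen : ∀ K : Subgroup G, K ⊔ N = ⊤ → K = ⊤ := fun K hK =>
    frattini_nongenerating (top_unique (hK ▸ sup_le_sup_left hN K))
  refine le_antisymm ?_ <| mGen_le fun S hS => card_le_mGen_of_surjective hπ
    (by rw [hker, hS.1, top_sup_eq]) fun s hs h => (hS.2 s hs).ne (hnongen _ (hker ▸ h))
  obtain ⟨T, hT, hcard⟩ := exists_indepGen_card_eq_mGen (G := G ⧸ N)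
  have hσ : ∀ q, QuotientGroup.mk' N (Function.surjInv hπ q) = q := Function.surjInv_eq hπ
  have hgen : closure (Function.surjInv hπ '' T) = ⊤ := by
    have := closure_image_section_sup_ker_eq_top hσ hT.1
    exact hnongen _ (by rwa [hker] at this)
  have hS := hT.image_section_union hσ (Set.empty_subset _) (by rwa [Set.union_empty]) (by simp)
  rw [← hcard, ← Finset.card_image_of_injective T (Function.injective_surjInv hπ)]
  exact le_mGen (by simpa using hS)

end Frattini

section ChiefFactor

variable {G H : Type*} [Group G] [Group H]

def IsChiefFactor (Y X : Subgroup G) : Prop :=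
  Y < X ∧ ∀ N : Subgroup G, N.Normal → Y ≤ N → N ≤ X → N = Y ∨ N = X

lemma IsChiefFactor.map {Y X : Subgroup G} (h : IsChiefFactor Y X) {φ : G →* H}
    (hφ : Function.Surjective φ) (hY : φ.ker ≤ Y) : IsChiefFactor (Y.map φ) (X.map φ) := by
  have hX : φ.ker ≤ X := hY.trans h.1.le
  refine ⟨?_, fun K hK hYK hKX => ?_⟩
  · rw [← comap_lt_comap_of_surjective hφ, comap_map_eq_self hY, comap_map_eq_self hX]
    exact h.1
  · rw [map_le_iff_le_comap] at hYK
    rw [← comap_le_comap_of_surjective hφ, comap_map_eq_self hX] at hKX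
    rw [← map_comap_eq_self_of_surjective hφ K]
    rcases h.2 _ (hK.comap φ) hYK hKX with h' | h' <;> rw [h'] <;> simp

variable {N : Subgroup G} [N.Normal]

lemma IsChiefFactor.le_centralizer_self [Group.IsSolvable G] (hN : IsChiefFactor ⊥ N) :
    N ≤ centralizer N := by
  rw [← commutator_eq_bot_iff_le_centralizer]
  refine (hN.2 _ (commutator_normal N N) bot_le (commutator_le_right N N)).resolve_right ?_
  exact (Group.IsSolvable.commutator_lt_of_ne_bot hN.1.ne').ne

/-- `K ⊓ N` is normalised both by `K` and, being inside the abelian `N`, by `N`. -/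
lemma IsChiefFactor.inf_eq_bot_of_sup_eq_top (hN : IsChiefFactor ⊥ N)
    (hcomm : N ≤ centralizer N) {K : Subgroup G} (hK : K ≠ ⊤) (hKN : K ⊔ N = ⊤) :
    K ⊓ N = ⊥ := by
  have hnormal : (K ⊓ N).Normal := by
    rw [← normalizer_eq_top_iff, ← top_le_iff, ← hKN]
    refine sup_le ?_ ?_
    · exact (le_inf K.le_normalizer le_normalizer_of_normal).trans
        inf_normalizer_le_normalizer_inf
    · exact (hcomm.trans (centralizer_le inf_le_right)).trans (centralizer_le_normalizer _)
  refine (hN.2 _ hnormal bot_le inf_le_right).resolve_right fun h => hK ?_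
  rw [← hKN, eq_comm, sup_eq_left, ← h]
  exact inf_le_left

end ChiefFactor

section Complement

variable {G : Type*} [Group G] {N : Subgroup G} [N.Normal]

lemma eq_of_le_of_inf_eq_bot_of_sup_eq_top {K L : Subgroup G} (hKL : K ≤ L) (hL : L ⊓ N = ⊥)
    (hK : K ⊔ N = ⊤) : K = L := by
  refine le_antisymm hKL fun x hx => ?_
  have hx' : x ∈ ((K ⊔ N : Subgroup G) : Set G) := by
    rw [hK]
    trivial
  obtain ⟨k, hk, n, hn, rfl⟩ := (mul_normal K N ▸ hx')
  have : n ∈ L ⊓ N := ⟨(mul_mem_cancel_left (hKL hk)).mp hx, hn⟩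
  rw [hL, mem_bot] at this
  simpa [this] using hk

/-- A subset of `S \ {s}` generating modulo `N` generates the whole complement
`closure (S \ {s})`, which contains the removed generator `t`. -/
lemma IndepGen.closure_diff_diff_sup_ne_top {S : Set G} (hS : IndepGen S) {s t : G}
    (ht : t ∈ S) (hts : t ≠ s) (hcompl : closure (S \ {s}) ⊓ N = ⊥) :
    closure ((S \ {s}) \ {t}) ⊔ N ≠ ⊤ := by
  intro htop
  have hKL := eq_of_le_of_inf_eq_bot_of_sup_eq_top (closure_mono Set.sdiff_subset) hcompl htop
  have htmem : t ∈ closure (S \ {t}) := by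
    have : t ∈ closure ((S \ {s}) \ {t}) := hKL ▸ subset_closure ⟨ht, hts⟩
    exact closure_mono (Set.sdiff_subset_sdiff_left Set.sdiff_subset) this
  refine (hS.2 t ht).ne (top_unique (hS.1 ▸ (closure_le _).mpr fun u hu => ?_))
  by_cases hut : u = t
  · exact hut ▸ htmem
  · exact subset_closure ⟨hu, hut⟩

variable [Finite G]

lemma IsChiefFactor.mGen_le_mGen_quotient_add_one (hN : IsChiefFactor ⊥ N)
    (hcomm : N ≤ centralizer N) : mGen G ≤ mGen (G ⧸ N) + 1 := by
  classical
  have hπ := QuotientGroup.mk'_surjective N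
  have hker := QuotientGroup.ker_mk' N
  refine mGen_le fun S hS => ?_
  by_cases hsupp : ∃ s ∈ S, closure ((S : Set G) \ {s}) ⊔ N = ⊤
  · obtain ⟨s, hs, hsup⟩ := hsupp
    have hcompl := hN.inf_eq_bot_of_sup_eq_top hcomm (hS.2 s hs).ne hsup
    have := card_le_mGen_of_surjective hπ (T := S.erase s) (by rwa [Finset.coe_erase, hker])
      fun t ht => by
        rw [Finset.coe_erase, hker]
        exact hS.closure_diff_diff_sup_ne_top (Finset.mem_of_mem_erase ht)
          (Finset.ne_of_mem_erase ht) hcompl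
    rw [Finset.card_erase_of_mem hs] at this
    omega
  · simp only [not_exists, not_and] at hsupp
    refine (card_le_mGen_of_surjective hπ (by rw [hker, hS.1, top_sup_eq]) ?_).trans le_self_add
    simpa [hker] using hsupp

lemma IsChiefFactor.mGen_quotient_add_one_le (hN : IsChiefFactor ⊥ N)
    (hcomm : N ≤ centralizer N) {M : Subgroup G} (hM : IsCoatom M) (hNM : ¬ N ≤ M) :
    mGen (G ⧸ N) + 1 ≤ mGen G := by
  classical
  have hπ := QuotientGroup.mk'_surjective N
  have hker := QuotientGroup.ker_mk' N
  have hMN : M ⊔ N = ⊤ := hM.2 _ (left_lt_sup.mpr hNM)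
  have hcompl := hN.inf_eq_bot_of_sup_eq_top hcomm hM.1 hMN
  obtain ⟨x, hxN, hxM⟩ := Set.not_subset.mp hNM
  obtain ⟨T, hT, hcard⟩ := exists_indepGen_card_eq_mGen (G := G ⧸ N)
  have hlift : ∀ q : G ⧸ N, ∃ g ∈ M, QuotientGroup.mk' N g = q := fun q => by
    have hmap : M.map (QuotientGroup.mk' N) = ⊤ := by
      rwa [map_eq_top_iff_sup_ker_eq_top hπ, hker]
    exact mem_map.mp (hmap ▸ mem_top q)
  choose σ hσM hσ using hlift
  have hσM' : closure (σ '' T) = M := by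
    refine eq_of_le_of_inf_eq_bot_of_sup_eq_top ?_ hcompl ?_
    · exact (closure_le _).mpr (Set.image_subset_iff.mpr fun q _ => hσM q)
    · have := closure_image_section_sup_ker_eq_top hσ hT.1
      rwa [hker] at this
  have hgen : closure (σ '' T ∪ {x}) = ⊤ := hM.2 _ <| by
    refine lt_of_le_of_ne (hσM' ▸ closure_mono Set.subset_union_left) fun h => hxM ?_
    exact h ▸ subset_closure (Set.mem_union_right _ rfl)
  have hind := hT.image_section_union hσ (by simpa using hxN) hgen fun y hy => by
    refine lt_of_le_of_lt (closure_mono ?_) (hσM' ▸ hM.1.lt_top)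
    rintro u ⟨hu | hu, huy⟩
    · exact hu
    · exact absurd (hu.trans hy.symm) huy
  have hx : x ∉ T.image σ := by
    simp only [Finset.mem_image, not_exists, not_and]
    exact fun q _ hq => hxM (hq ▸ hσM q)
  calc mGen (G ⧸ N) + 1 = (insert x (T.image σ)).card := by
        rw [Finset.card_insert_of_notMem hx,
          Finset.card_image_of_injective _ (Function.LeftInverse.injective hσ), hcard]
    _ ≤ mGen G := le_mGen (by simpa [Set.union_singleton] using hind)

lemma IsChiefFactor.mGen_eq_mGen_quotient_add_one [Group.IsSolvable G]
    (hN : IsChiefFactor ⊥ N) (hF : ¬ IsFrattiniFactor ⊥ N) : mGen G = mGen (G ⧸ N) + 1 := by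
  obtain ⟨M, hM, -, hNM⟩ : ∃ M, IsCoatom M ∧ ⊥ ≤ M ∧ ¬ N ≤ M := by
    simpa [IsFrattiniFactor] using hF
  exact le_antisymm (hN.mGen_le_mGen_quotient_add_one hN.le_centralizer_self)
    (hN.mGen_quotient_add_one_le hN.le_centralizer_self hM hNM)

end Complement

lemma natCard_subtype_fin_succ {n : ℕ} (p : Fin (n + 1) → Prop) [DecidablePred p] :
    Nat.card {i // p i} = (if p 0 then 1 else 0) + Nat.card {i : Fin n // p i.succ} := by
  simp only [Nat.card_eq_fintype_card, Fintype.card_subtype, Fin.card_filter_univ_succ']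

section ChiefSeries

variable {G H : Type*} [Group G] [Group H]

structure IsChiefSeries {n : ℕ} (c : Fin (n + 1) → Subgroup G) : Prop where
  bot_eq : c 0 = ⊥
  top_eq : c (Fin.last n) = ⊤
  normal : ∀ i, (c i).Normal
  isChiefFactor : ∀ i : Fin n, IsChiefFactor (c i.castSucc) (c i.succ)

namespace IsChiefSeries

variable {n : ℕ}

lemma monotone {c : Fin (n + 1) → Subgroup G} (hc : IsChiefSeries c) : Monotone c :=
  Fin.monotone_iff_le_succ.mpr fun i => (hc.isChiefFactor i).1.le

lemma one_le_succ {c : Fin (n + 2) → Subgroup G} (hc : IsChiefSeries c) (i : Fin (n + 1)) :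
    c 1 ≤ c i.succ :=
  hc.monotone (Fin.succ_zero_eq_one ▸ Fin.succ_le_succ_iff.mpr (Fin.zero_le i))

lemma map_succ {c : Fin (n + 2) → Subgroup G} (hc : IsChiefSeries c) {φ : G →* H}
    (hφ : Function.Surjective φ) (hker : φ.ker = c 1) :
    IsChiefSeries fun i : Fin (n + 1) => (c i.succ).map φ where
  bot_eq := by rw [Fin.succ_zero_eq_one, ← hker, Subgroup.map_eq_bot_iff]
  top_eq := by rw [Fin.succ_last, hc.top_eq, map_top_of_surjective φ hφ]
  normal i := (hc.normal _).map φ hφ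
  isChiefFactor i := by
    simp only [Fin.succ_castSucc]
    exact (hc.isChiefFactor i.succ).map hφ (hker ▸ Fin.succ_castSucc i ▸ hc.one_le_succ _)

theorem mGen_eq [Finite G] [Group.IsSolvable G]
    {c : Fin (n + 1) → Subgroup G} (hc : IsChiefSeries c) :
    mGen G = Nat.card {i : Fin n // ¬ IsFrattiniFactor (c i.castSucc) (c i.succ)} := by
  classical
  induction n generalizing G with
  | zero => simp [mGen_eq_zero_of_bot_eq_top (hc.bot_eq.symm.trans hc.top_eq)]
  | succ n ih =>
    have : (c 1).Normal := hc.normal 1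
    have hπ := QuotientGroup.mk'_surjective (c 1)
    have hquot := ih (hc.map_succ hπ (QuotientGroup.ker_mk' _))
    have hfactors (i : Fin n) :
        IsFrattiniFactor ((c i.castSucc.succ).map (QuotientGroup.mk' (c 1)))
          ((c i.succ.succ).map (QuotientGroup.mk' (c 1))) ↔
        IsFrattiniFactor (c i.succ.castSucc) (c i.succ.succ) := by
      rw [Fin.succ_castSucc]
      exact isFrattiniFactor_map_iff hπ ((QuotientGroup.ker_mk' _).trans_le
        (Fin.succ_castSucc i ▸ hc.one_le_succ _))
    rw [natCard_subtype_fin_succ,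
      ← Nat.card_congr (Equiv.subtypeEquivRight fun i => (hfactors i).not), ← hquot]
    have hN : IsChiefFactor ⊥ (c 1) := hc.bot_eq ▸ hc.isChiefFactor 0
    by_cases hF : IsFrattiniFactor ⊥ (c 1)
    · simpa [hc.bot_eq, hF] using
        (mGen_quotient_eq_of_le_frattini (isFrattiniFactor_bot_iff.mp hF)).symm
    · simpa [hc.bot_eq, hF, add_comm] using hN.mGen_eq_mGen_quotient_add_one hF

end IsChiefSeries

end ChiefSeries

theorem m_eq_nonFrattini_chief_factors_of_solvable_general
    (G : Type*) [Group G] [Finite G] [Group.IsSolvable G]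
    (n : ℕ) (c : Fin (n + 1) → Subgroup G)
    (h0 : c 0 = ⊥) (hlast : c (Fin.last n) = ⊤)
    (hnorm : ∀ i, (c i).Normal)
    (hchief : ∀ i : Fin n, c i.castSucc < c i.succ ∧
      ∀ N : Subgroup G, N.Normal → c i.castSucc ≤ N → N ≤ c i.succ →
        N = c i.castSucc ∨ N = c i.succ) :
    mGen G = Nat.card {i : Fin n // ¬ IsFrattiniFactor (c i.castSucc) (c i.succ)} :=
  IsChiefSeries.mGen_eq ⟨h0, hlast, hnorm, hchief⟩

theorem m_eq_nonFrattini_chief_factors_of_solvable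
    (G : Type*) [Group G] [Finite G] [Group.IsSolvable G]
    (n : ℕ) (c : Fin (n + 1) → Subgroup G)
    (hmono : Monotone c) (h0 : c 0 = ⊥) (hlast : c (Fin.last n) = ⊤)
    (hnorm : ∀ i, (c i).Normal)
    (hchief : ∀ i : Fin n, c i.castSucc < c i.succ ∧
      ∀ N : Subgroup G, N.Normal → c i.castSucc ≤ N → N ≤ c i.succ →
        N = c i.castSucc ∨ N = c i.succ) :
    mGen G = Nat.card {i : Fin n // ¬ IsFrattiniFactor (c i.castSucc) (c i.succ)} :=
  m_eq_nonFrattini_chief_factors_of_solvable_general G n c h0 hlast hnorm hchief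
end

section
/- Let t ≥ 1 and let G = (Z/3Z)^t ⋊ Z/2Z × Z/2Z, where Z/2Z acts on (Z/3Z)^t by inversion. Then d(G) = t + 1 and m(G) = t + 2. -/
/-- The action of `Z/2` on `(Z/3)^t` (written multiplicatively) by inversion. -/
def invAction (t : ℕ) :
    Multiplicative (ZMod 2) →* MulAut (Fin t → Multiplicative (ZMod 3)) where
  toFun x := if x.toAdd = 0 then 1 else MulEquiv.inv _
  map_one' := by
    simp
  map_mul' x y := by
    have key : ∀ z : ZMod 2, z = 0 ∨ z = 1 := by decide
    have h11 : (1 : ZMod 2) + 1 = 0 := by decide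
    have h10 : (1 : ZMod 2) ≠ 0 := by decide
    have h2 : (MulEquiv.inv (Fin t → Multiplicative (ZMod 3))) *
        (MulEquiv.inv (Fin t → Multiplicative (ZMod 3))) = 1 := by
      ext v
      simp
    have hxy : (Multiplicative.toAdd (x * y)) =
      Multiplicative.toAdd x + Multiplicative.toAdd y := rfl
    rcases key (Multiplicative.toAdd x) with hx | hx <;>
      rcases key (Multiplicative.toAdd y) with hy | hy <;>
      simp [hxy, hx, hy, h11, h10, h2]

instance {N G : Type*} [Group N] [Group G] [Finite N] [Finite G] {φ : G →* MulAut N} :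
    Finite (N ⋊[φ] G) :=
  Finite.of_surjective (fun p : N × G => ⟨p.1, p.2⟩) fun x => ⟨⟨x.left, x.right⟩, rfl⟩


section Aux

abbrev Kt (t : ℕ) := Fin t → Multiplicative (ZMod 3)
abbrev C2' := Multiplicative (ZMod 2)
abbrev Gt (t : ℕ) := (Kt t ⋊[invAction t] C2') × C2'

lemma invAction_apply (t : ℕ) (x : C2') (v : Kt t) :
    (invAction t x) v = if x.toAdd = 0 then v else v⁻¹ := by
  show (if x.toAdd = 0 then (1 : MulAut (Kt t)) else MulEquiv.inv _) v = _
  split <;> rfl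

variable {t : ℕ}

def vec (v : Kt t) : Fin t → ZMod 3 := fun i => (v i).toAdd

lemma vec_mul (v w : Kt t) : vec (v * w) = vec v + vec w := rfl
lemma vec_inv (v : Kt t) : vec v⁻¹ = -vec v := rfl
lemma vec_one : vec (1 : Kt t) = 0 := rfl

lemma zmod2_cases (z : ZMod 2) : z = 0 ∨ z = 1 := by revert z; decide

/-- The subgroup of elements `((v, eps), delta)` with `vec v - eps * a` in `U`. -/
def MU (U : Submodule (ZMod 3) (Fin t → ZMod 3)) (a : Fin t → ZMod 3) : Subgroup (Gt t) where
  carrier := {x | vec x.1.left - (if x.1.right.toAdd = 0 then 0 else a) ∈ U}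
  one_mem' := by
    show vec (1 : Kt t) - (if (Multiplicative.toAdd (1 : C2')) = 0 then 0 else a) ∈ U
    simp [vec_one]
  mul_mem' := by
    intro x y hx hy
    simp only [Set.mem_setOf_eq] at hx hy ⊢
    have hl : (x * y).1.left = x.1.left * (invAction t x.1.right) y.1.left := rfl
    have hr : Multiplicative.toAdd ((x * y).1.right)
        = Multiplicative.toAdd x.1.right + Multiplicative.toAdd y.1.right := rfl
    have c00 : (0 : ZMod 2) + 0 = 0 := by decide
    have c01 : (0 : ZMod 2) + 1 = 1 := by decide
    have c10 : (1 : ZMod 2) + 0 = 1 := by decide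
    have c11 : (1 : ZMod 2) + 1 = 0 := by decide
    have n1 : ¬ (1 : ZMod 2) = 0 := by decide
    rw [hl, hr, invAction_apply]
    rcases zmod2_cases (Multiplicative.toAdd x.1.right) with h1 | h1 <;>
      rcases zmod2_cases (Multiplicative.toAdd y.1.right) with h2 | h2 <;>
      rw [h1] at hx ⊢ <;> rw [h2] at hy ⊢
    · rw [if_pos rfl] at hx hy
      rw [c00, if_pos rfl, if_pos rfl, vec_mul]
      convert U.add_mem hx hy using 1
      abel
    · rw [if_pos rfl] at hx
      rw [if_neg n1] at hy
      rw [c01, if_pos rfl, if_neg n1, vec_mul]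
      convert U.add_mem hx hy using 1
      abel
    · rw [if_neg n1] at hx
      rw [if_pos rfl] at hy
      rw [c10, if_neg n1, if_neg n1, vec_mul, vec_inv]
      convert U.sub_mem hx hy using 1
      abel
    · rw [if_neg n1] at hx hy
      rw [c11, if_neg n1, if_pos rfl, vec_mul, vec_inv]
      convert U.sub_mem hx hy using 1
      abel
  inv_mem' := by
    intro x hx
    simp only [Set.mem_setOf_eq] at hx ⊢
    have hl : (x⁻¹).1.left = (invAction t x.1.right⁻¹) x.1.left⁻¹ := rfl
    have hr : Multiplicative.toAdd ((x⁻¹).1.right) = -Multiplicative.toAdd x.1.right := rfl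
    have hinv : Multiplicative.toAdd (x.1.right⁻¹) = -Multiplicative.toAdd x.1.right := rfl
    have n1 : ¬ (1 : ZMod 2) = 0 := by decide
    have m0 : -(0 : ZMod 2) = 0 := by decide
    have m1 : -(1 : ZMod 2) = 1 := by decide
    rw [hl, hr, invAction_apply, hinv]
    rcases zmod2_cases (Multiplicative.toAdd x.1.right) with h1 | h1 <;> rw [h1] at hx ⊢
    · rw [if_pos rfl] at hx
      rw [m0, if_pos rfl, if_pos rfl, vec_inv]
      convert U.neg_mem hx using 1
      abel
    · rw [if_neg n1] at hx
      rw [m1, if_neg n1, if_neg n1, vec_inv, vec_inv, neg_neg]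
      exact hx

lemma mem_MU {U : Submodule (ZMod 3) (Fin t → ZMod 3)} {a : Fin t → ZMod 3} {x : Gt t} :
    x ∈ MU U a ↔ vec x.1.left - (if x.1.right.toAdd = 0 then 0 else a) ∈ U := Iff.rfl

end Aux

/-- Number of prime factors with multiplicity. -/
def bigOmega (n : ℕ) : ℕ := n.primeFactorsList.length

lemma bigOmega_mul {a b : ℕ} (ha : a ≠ 0) (hb : b ≠ 0) :
    bigOmega (a * b) = bigOmega a + bigOmega b := by
  unfold bigOmega
  rw [(Nat.perm_primeFactorsList_mul ha hb).length_eq, List.length_append]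

lemma bigOmega_pos {c : ℕ} (hc : 2 ≤ c) : 1 ≤ bigOmega c := by
  rcases Nat.lt_or_ge (bigOmega c) 1 with h | h
  · exfalso
    have : c.primeFactorsList = [] := List.length_eq_zero_iff.mp (Nat.lt_one_iff.mp h)
    rcases (Nat.primeFactorsList_eq_nil c).mp this with rfl | rfl <;> omega
  · exact h

lemma bigOmega_lt_of_dvd {a b : ℕ} (hb : b ≠ 0) (hdvd : a ∣ b) (hne : a ≠ b) :
    bigOmega a < bigOmega b := by
  obtain ⟨c, rfl⟩ := hdvd
  have ha : a ≠ 0 := by rintro rfl; simp at hb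
  have hc : c ≠ 0 := by rintro rfl; simp at hb
  have hc1 : c ≠ 1 := by rintro rfl; simp at hne
  have h2 : 2 ≤ c := by omega
  have := bigOmega_pos h2
  rw [bigOmega_mul ha hc]
  omega

lemma bigOmega_prime {p : ℕ} (hp : p.Prime) : bigOmega p = 1 := by
  unfold bigOmega
  rw [Nat.primeFactorsList_prime hp]
  rfl

lemma bigOmega_pow_prime {p : ℕ} (hp : p.Prime) (k : ℕ) : bigOmega (p ^ k) = k := by
  induction k with
  | zero => simp [bigOmega]
  | succ n ih =>
    rw [pow_succ, bigOmega_mul (pow_ne_zero _ hp.ne_zero) hp.ne_zero, ih, bigOmega_prime hp]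

/-- The chain argument: an independent set has at most `Omega(|G|)` elements. -/
lemma indep_card_le {G : Type*} [Group G] [Finite G] (S : Finset G)
    (h : ∀ s ∈ S, s ∉ Subgroup.closure ((S : Set G) \ {s})) :
    S.card ≤ bigOmega (Nat.card (Subgroup.closure (S : Set G))) := by
  classical
  induction S using Finset.strongInduction with
  | _ S ih =>
    rcases Finset.eq_empty_or_nonempty S with rfl | ⟨s, hs⟩
    · simp
    · set S' := S.erase s with hS'
      have hsub : (S' : Set G) = (S : Set G) \ {s} := by
        simp [hS', Finset.coe_erase]
      have hlt : S' ⊂ S := Finset.erase_ssubset hs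
      have h' : ∀ x ∈ S', x ∉ Subgroup.closure ((S' : Set G) \ {x}) := by
        intro x hx hmem
        exact h x (Finset.mem_of_mem_erase hx)
          (Subgroup.closure_mono (by
            rw [hsub]
            exact Set.diff_subset_diff_left Set.diff_subset) hmem)
      have key := ih S' hlt h'
      have hle : Subgroup.closure ((S' : Set G)) ≤ Subgroup.closure (S : Set G) :=
        Subgroup.closure_mono (by rw [hsub]; exact Set.diff_subset)
      have hne : Subgroup.closure ((S' : Set G)) ≠ Subgroup.closure (S : Set G) := by
        intro heq
        apply h s hs
        rw [← hsub, heq]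
        exact Subgroup.subset_closure hs
      have hdvd : Nat.card (Subgroup.closure ((S' : Set G))) ∣
          Nat.card (Subgroup.closure (S : Set G)) := Subgroup.card_dvd_of_le hle
      have hcardne : Nat.card (Subgroup.closure ((S' : Set G))) ≠
          Nat.card (Subgroup.closure (S : Set G)) := by
        intro heq
        exact hne (Subgroup.eq_of_le_of_card_ge hle heq.ge)
      have hbig := bigOmega_lt_of_dvd (Nat.card_pos).ne' hdvd hcardne
      have hcard : S'.card + 1 = S.card := Finset.card_erase_add_one hs
      omega

section Lower

/-- Any generating set of `Gt t` has at least `t + 1` elements. -/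
lemma gen_card_lower (t : ℕ) (S : Finset (Gt t))
    (hS : Subgroup.closure (S : Set (Gt t)) = ⊤) : t + 1 ≤ S.card := by
  classical
  by_cases hall : ∀ s ∈ S, s.1.right = 1
  · exfalso
    set ψ : Gt t →* C2' :=
      (SemidirectProduct.rightHom).comp (MonoidHom.fst _ _) with hψ
    have hker : Subgroup.closure (S : Set (Gt t)) ≤ ψ.ker := by
      rw [Subgroup.closure_le]
      intro s hs
      have : ψ s = s.1.right := rfl
      simp only [SetLike.mem_coe, MonoidHom.mem_ker, this]
      exact hall s (by exact_mod_cast hs)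
    rw [hS] at hker
    have hx := hker (Subgroup.mem_top
      ((⟨1, Multiplicative.ofAdd 1⟩ : Kt t ⋊[invAction t] C2'), (1 : C2')))
    rw [MonoidHom.mem_ker] at hx
    have : Multiplicative.ofAdd (1 : ZMod 2) = 1 := hx
    exact (by decide : ¬ Multiplicative.ofAdd (1 : ZMod 2) = 1) this
  · push_neg at hall
    obtain ⟨s0, hs0S, hs0⟩ := hall
    have hs0' : Multiplicative.toAdd s0.1.right = 1 := by
      rcases zmod2_cases (Multiplicative.toAdd s0.1.right) with h | h
      · exact absurd (by simpa using congrArg Multiplicative.ofAdd h) hs0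
      · exact h
    set a : Fin t → ZMod 3 := vec s0.1.left with ha
    set w : Gt t → (Fin t → ZMod 3) :=
      fun s => vec s.1.left - (if s.1.right.toAdd = 0 then 0 else a) with hw
    set U : Submodule (ZMod 3) (Fin t → ZMod 3) :=
      Submodule.span (ZMod 3) (((S.erase s0).image w : Finset _) : Set _) with hU
    have hSMU : Subgroup.closure (S : Set (Gt t)) ≤ MU U a := by
      rw [Subgroup.closure_le]
      intro s hs
      rw [SetLike.mem_coe, mem_MU]
      by_cases hss : s = s0
      · subst hss
        rw [hs0', if_neg (by decide : ¬ (1 : ZMod 2) = 0)]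
        have : vec s.1.left - a = 0 := by rw [ha]; abel
        rw [this]
        exact U.zero_mem
      · apply Submodule.subset_span
        simp only [Finset.coe_image, Set.mem_image, Finset.mem_coe, Finset.mem_erase]
        exact ⟨s, ⟨hss, by exact_mod_cast hs⟩, rfl⟩
    rw [hS, top_le_iff] at hSMU
    have hUtop : U = ⊤ := by
      rw [Submodule.eq_top_iff']
      intro v
      have hmem : ((⟨fun i => Multiplicative.ofAdd (v i), 1⟩ :
          Kt t ⋊[invAction t] C2'), (1 : C2')) ∈ MU U a := by
        rw [hSMU]; exact Subgroup.mem_top _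
      rw [mem_MU] at hmem
      have h0 : Multiplicative.toAdd ((⟨fun i => Multiplicative.ofAdd (v i), 1⟩ :
          Kt t ⋊[invAction t] C2'), (1 : C2')).1.right = 0 := rfl
      rw [h0, if_pos rfl, sub_zero] at hmem
      exact hmem
    have hrank : t ≤ ((S.erase s0).image w).card := by
      calc t = Module.finrank (ZMod 3) (Fin t → ZMod 3) := (Module.finrank_fin_fun _).symm
        _ = Module.finrank (ZMod 3) (⊤ : Submodule (ZMod 3) (Fin t → ZMod 3)) :=
            (finrank_top _ _).symm
        _ = Module.finrank (ZMod 3) U := by rw [hUtop]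
        _ ≤ ((S.erase s0).image w).card := finrank_span_finset_le_card _
    have h1 : ((S.erase s0).image w).card ≤ (S.erase s0).card := Finset.card_image_le
    have h2 : (S.erase s0).card + 1 = S.card := Finset.card_erase_add_one hs0S
    omega

end Lower

section Gen

def deltaK (t : ℕ) (i : Fin t) : Kt t := fun j => if j = i then Multiplicative.ofAdd 1 else 1
def kgen (t : ℕ) (i : Fin t) : Gt t := (⟨deltaK t i, 1⟩, 1)
def rgen (t : ℕ) : Gt t := (⟨1, Multiplicative.ofAdd 1⟩, 1)
def zgen (t : ℕ) : Gt t := (1, Multiplicative.ofAdd 1)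
def r2gen (t : ℕ) (i : Fin t) : Gt t := (⟨deltaK t i, Multiplicative.ofAdd 1⟩, 1)
def g0gen (t : ℕ) : Gt t := (⟨1, Multiplicative.ofAdd 1⟩, Multiplicative.ofAdd 1)

def psiK (t : ℕ) : Kt t →* Gt t := (MonoidHom.inl _ _).comp SemidirectProduct.inl

lemma psiK_apply (t : ℕ) (v : Kt t) :
    psiK t v = ((⟨v, 1⟩ : Kt t ⋊[invAction t] C2'), (1 : C2')) := rfl

lemma pow_ofAdd_one (z : ZMod 3) :
    (Multiplicative.ofAdd (1 : ZMod 3)) ^ z.val = Multiplicative.ofAdd z := by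
  revert z; decide

lemma prod_deltaK (t : ℕ) (v : Kt t) :
    v = ∏ i, (deltaK t i) ^ ((Multiplicative.toAdd (v i)).val) := by
  funext j
  rw [Finset.prod_apply]
  simp only [Pi.pow_apply, deltaK]
  rw [Finset.prod_congr rfl (fun i _ => by rw [ite_pow])]
  simp only [one_pow]
  rw [Finset.prod_ite_eq, if_pos (Finset.mem_univ j), pow_ofAdd_one, ofAdd_toAdd]

lemma top_of_mem (t : ℕ) (H : Subgroup (Gt t)) (hk : ∀ i, kgen t i ∈ H)
    (hr : rgen t ∈ H) (hz : zgen t ∈ H) : H = ⊤ := by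
  rw [Subgroup.eq_top_iff']
  have hK : ∀ v : Kt t, ((⟨v, 1⟩ : Kt t ⋊[invAction t] C2'), (1 : C2')) ∈ H := by
    intro v
    rw [← psiK_apply]
    have hmem : v ∈ H.comap (psiK t) := by
      rw [prod_deltaK t v]
      refine Subgroup.prod_mem _ (fun i _ => Subgroup.pow_mem _ ?_ _)
      exact Subgroup.mem_comap.mpr (hk i)
    exact hmem
  have hE : ∀ ε : C2', ((⟨1, ε⟩ : Kt t ⋊[invAction t] C2'), (1 : C2')) ∈ H := by
    intro ε
    rcases zmod2_cases (Multiplicative.toAdd ε) with h | h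
    · have : ε = 1 := by
        rw [← ofAdd_toAdd ε, h]; rfl
      subst this
      exact H.one_mem
    · have : ε = Multiplicative.ofAdd 1 := by
        rw [← ofAdd_toAdd ε, h]
      subst this
      exact hr
  have hD : ∀ δ : C2', ((1 : Kt t ⋊[invAction t] C2'), δ) ∈ H := by
    intro δ
    rcases zmod2_cases (Multiplicative.toAdd δ) with h | h
    · have : δ = 1 := by
        rw [← ofAdd_toAdd δ, h]; rfl
      subst this
      exact H.one_mem
    · have : δ = Multiplicative.ofAdd 1 := by
        rw [← ofAdd_toAdd δ, h]
      subst this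
      exact hz
  intro x
  obtain ⟨⟨v, ε⟩, δ⟩ := x
  have hx : ((⟨v, ε⟩ : Kt t ⋊[invAction t] C2'), δ)
      = (⟨v, 1⟩, (1 : C2')) * ((⟨1, ε⟩, (1 : C2')) * ((1 : Kt t ⋊[invAction t] C2'), δ)) := by
    rw [Prod.ext_iff]
    constructor
    · apply SemidirectProduct.ext
      · show v = v * (invAction t 1) ((1 : Kt t) * (invAction t ε) (1 : Kt t))
        simp [invAction_apply]
      · show ε = 1 * (ε * 1)
        simp
    · show δ = 1 * (1 * δ)
      simp
  rw [hx]
  exact H.mul_mem (hK v) (H.mul_mem (hE ε) (hD δ))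

end Gen

section Rel

variable (t : ℕ)

def mmgen (i : Fin t) : Gt t := (⟨deltaK t i, 1⟩, Multiplicative.ofAdd 1)

lemma c2_mul_self : (Multiplicative.ofAdd (1 : ZMod 2)) * Multiplicative.ofAdd 1 = 1 := by decide

lemma deltaK_cube (i : Fin t) : deltaK t i * deltaK t i * deltaK t i = 1 := by
  funext j
  simp only [deltaK, Pi.mul_apply, Pi.one_apply]
  by_cases h : j = i <;> simp [h]
  decide

lemma rel1 (i : Fin t) : r2gen t i * g0gen t = mmgen t i := by
  rw [Prod.ext_iff]
  refine ⟨SemidirectProduct.ext ?_ ?_, ?_⟩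
  · show deltaK t i * (invAction t (Multiplicative.ofAdd 1)) 1 = deltaK t i
    rw [map_one, mul_one]
  · show Multiplicative.ofAdd 1 * Multiplicative.ofAdd 1 = 1
    exact c2_mul_self
  · show (1 : C2') * Multiplicative.ofAdd 1 = Multiplicative.ofAdd 1
    rw [one_mul]

lemma rel2 (i : Fin t) : mmgen t i ^ 3 = zgen t := by
  have h3 : mmgen t i ^ 3 = mmgen t i * mmgen t i * mmgen t i := by
    rw [pow_succ, pow_succ, pow_one]
  rw [h3, Prod.ext_iff]
  refine ⟨SemidirectProduct.ext ?_ ?_, ?_⟩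
  · show deltaK t i * (invAction t 1) (deltaK t i) * (invAction t (1 * 1)) (deltaK t i)
      = (1 : Kt t)
    rw [invAction_apply, invAction_apply]
    rw [if_pos (by rfl : Multiplicative.toAdd (1 : C2') = 0),
      if_pos (by rfl : Multiplicative.toAdd ((1 : C2') * 1) = 0)]
    exact deltaK_cube t i
  · show (1 : C2') * 1 * 1 = 1
    rw [one_mul, one_mul]
  · show Multiplicative.ofAdd 1 * Multiplicative.ofAdd 1 * Multiplicative.ofAdd 1
      = Multiplicative.ofAdd (1 : ZMod 2)
    rw [c2_mul_self, one_mul]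

lemma rel3 (i : Fin t) : mmgen t i * zgen t = kgen t i := by
  rw [Prod.ext_iff]
  refine ⟨SemidirectProduct.ext ?_ ?_, ?_⟩
  · show deltaK t i * (invAction t 1) 1 = deltaK t i
    rw [map_one, mul_one]
  · show (1 : C2') * 1 = 1
    rw [one_mul]
  · exact c2_mul_self

lemma rel4 : g0gen t * zgen t = rgen t := by
  rw [Prod.ext_iff]
  refine ⟨SemidirectProduct.ext ?_ ?_, ?_⟩
  · show (1 : Kt t) * (invAction t (Multiplicative.ofAdd 1)) 1 = 1
    rw [map_one, mul_one]
  · show Multiplicative.ofAdd 1 * (1 : C2') = Multiplicative.ofAdd 1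
    rw [mul_one]
  · exact c2_mul_self

lemma deltaK_injective : Function.Injective (deltaK t) := by
  intro i j h
  by_contra hne
  have := congrFun h i
  simp only [deltaK, if_pos rfl, if_neg (Ne.symm hne ∘ Eq.symm)] at this
  · exact (by decide : ¬ Multiplicative.ofAdd (1 : ZMod 3) = 1) (by
      rw [← this]
      simp [if_neg (fun hij : i = j => hne hij)])

lemma kgen_injective : Function.Injective (kgen t) := by
  intro i j h
  exact deltaK_injective t (congrArg (fun x : Gt t => x.1.left) h)

lemma r2gen_injective : Function.Injective (r2gen t) := by
  intro i j h
  exact deltaK_injective t (congrArg (fun x : Gt t => x.1.left) h)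

lemma deltaK_ne_one (i : Fin t) : deltaK t i ≠ 1 := by
  intro h
  have := congrFun h i
  simp only [deltaK, if_pos rfl, Pi.one_apply] at this
  exact (by decide : ¬ Multiplicative.ofAdd (1 : ZMod 3) = 1) this

lemma ofAdd_one_ne_one : Multiplicative.ofAdd (1 : ZMod 2) ≠ 1 := by decide

end Rel

section Sets

variable (t : ℕ)

noncomputable def SrankF : Finset (Gt t) := (Finset.univ.image (r2gen t)) ∪ {g0gen t}
noncomputable def SindF : Finset (Gt t) := (Finset.univ.image (kgen t)) ∪ {rgen t, zgen t}

lemma r2gen_ne_g0gen (i : Fin t) : r2gen t i ≠ g0gen t := by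
  intro h
  exact deltaK_ne_one t i (congrArg (fun x : Gt t => x.1.left) h)

lemma kgen_ne_rgen (i : Fin t) : kgen t i ≠ rgen t := by
  intro h
  exact ofAdd_one_ne_one ((congrArg (fun x : Gt t => x.1.right) h).symm)

lemma kgen_ne_zgen (i : Fin t) : kgen t i ≠ zgen t := by
  intro h
  exact ofAdd_one_ne_one ((congrArg (fun x : Gt t => x.2) h).symm)

lemma rgen_ne_zgen : rgen t ≠ zgen t := by
  intro h
  exact ofAdd_one_ne_one ((congrArg (fun x : Gt t => x.2) h).symm)

lemma SrankF_card : (SrankF t).card = t + 1 := by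
  rw [SrankF, Finset.card_union_of_disjoint, Finset.card_image_of_injective _ (r2gen_injective t)]
  · simp
  · simp only [Finset.disjoint_left, Finset.mem_image, Finset.mem_singleton]
    rintro x ⟨i, _, rfl⟩ h
    exact r2gen_ne_g0gen t i h

lemma SindF_card : (SindF t).card = t + 2 := by
  rw [SindF, Finset.card_union_of_disjoint, Finset.card_image_of_injective _ (kgen_injective t)]
  · rw [Finset.card_pair (rgen_ne_zgen t)]
    simp
  · simp only [Finset.disjoint_left, Finset.mem_image, Finset.mem_insert, Finset.mem_singleton]
    rintro x ⟨i, _, rfl⟩ (h | h)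
    · exact kgen_ne_rgen t i h
    · exact kgen_ne_zgen t i h

lemma SrankF_gen (ht : 1 ≤ t) : Subgroup.closure ((SrankF t : Set (Gt t))) = ⊤ := by
  set H := Subgroup.closure ((SrankF t : Set (Gt t))) with hH
  have hg0 : g0gen t ∈ H := Subgroup.subset_closure (by simp [SrankF])
  have hr2 : ∀ i, r2gen t i ∈ H := fun i => Subgroup.subset_closure (by simp [SrankF])
  have hmm : ∀ i, mmgen t i ∈ H := fun i => by
    rw [← rel1]
    exact H.mul_mem (hr2 i) hg0
  have hz : zgen t ∈ H := by
    rw [← rel2 t ⟨0, ht⟩]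
    exact H.pow_mem (hmm _) 3
  have hk : ∀ i, kgen t i ∈ H := fun i => by
    rw [← rel3]
    exact H.mul_mem (hmm i) hz
  have hr : rgen t ∈ H := by
    rw [← rel4]
    exact H.mul_mem hg0 hz
  exact top_of_mem t H hk hr hz

lemma SindF_gen : Subgroup.closure ((SindF t : Set (Gt t))) = ⊤ := by
  apply top_of_mem t
  · exact fun i => Subgroup.subset_closure (by simp [SindF])
  · exact Subgroup.subset_closure (by simp [SindF])
  · exact Subgroup.subset_closure (by simp [SindF])

end Sets

section Cards

def sdpEquivProd {N G : Type*} [Group N] [Group G] {φ : G →* MulAut N} :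
    (N ⋊[φ] G) ≃ N × G where
  toFun x := (x.left, x.right)
  invFun p := ⟨p.1, p.2⟩
  left_inv x := by cases x; rfl
  right_inv p := rfl

lemma cardGt (t : ℕ) : Nat.card (Gt t) = 3 ^ t * 2 * 2 := by
  have h1 : Nat.card (Gt t)
      = Nat.card (Kt t ⋊[invAction t] C2') * Nat.card C2' := Nat.card_prod _ _
  have h2 : Nat.card (Kt t ⋊[invAction t] C2') = Nat.card (Kt t) * Nat.card C2' := by
    rw [Nat.card_congr (sdpEquivProd), Nat.card_prod]
  have h3 : Nat.card (Kt t) = 3 ^ t := by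
    rw [Nat.card_pi]
    have : Nat.card (Multiplicative (ZMod 3)) = 3 := by
      rw [Nat.card_congr (MulEquiv.toEquiv (MulEquiv.refl _))]
      rw [Nat.card_eq_fintype_card]
      rfl
    simp [this]
  have h4 : Nat.card C2' = 2 := by
    rw [Nat.card_eq_fintype_card]
    rfl
  rw [h1, h2, h3, h4]

lemma bigOmega_cardGt (t : ℕ) : bigOmega (Nat.card (Gt t)) = t + 2 := by
  rw [cardGt]
  have h3 : (3:ℕ) ^ t ≠ 0 := pow_ne_zero _ (by norm_num)
  rw [bigOmega_mul (by positivity) (by norm_num), bigOmega_mul h3 (by norm_num),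
    bigOmega_pow_prime (by norm_num) t, bigOmega_prime (by norm_num)]

end Cards

section Indep

variable (t : ℕ)

lemma zmod2_toAdd_eq_zero_iff (x : C2') : Multiplicative.toAdd x = 0 ↔ x = 1 := by
  constructor
  · intro h
    rw [← ofAdd_toAdd x, h]
    rfl
  · rintro rfl
    rfl

lemma SindF_indep : ∀ s ∈ (SindF t : Set (Gt t)),
    Subgroup.closure ((SindF t : Set (Gt t)) \ {s}) < ⊤ := by
  intro s hs
  have hmem : ∀ x ∈ (SindF t : Set (Gt t)), (∃ i, x = kgen t i) ∨ x = rgen t ∨ x = zgen t := by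
    intro x hx
    simp only [SindF, Finset.coe_union, Finset.coe_image, Finset.coe_univ, Set.image_univ,
      Set.mem_union, Set.mem_range, Finset.coe_insert, Finset.coe_singleton, Set.mem_insert_iff,
      Set.mem_singleton_iff] at hx
    rcases hx with ⟨i, rfl⟩ | h | h
    · exact Or.inl ⟨i, rfl⟩
    · exact Or.inr (Or.inl h)
    · exact Or.inr (Or.inr h)
  rcases hmem s hs with ⟨j, rfl⟩ | rfl | rfl
  · -- removing kgen j
    set N := MU (LinearMap.ker (LinearMap.proj (R := ZMod 3)
      (φ := fun _ : Fin t => ZMod 3) j)) 0 with hN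
    have hle : Subgroup.closure ((SindF t : Set (Gt t)) \ {kgen t j}) ≤ N := by
      rw [Subgroup.closure_le]
      intro x hx
      obtain ⟨hx1, hx2⟩ := hx
      rw [SetLike.mem_coe, mem_MU, ite_self, sub_zero, LinearMap.mem_ker]
      rcases hmem x hx1 with ⟨i, rfl⟩ | rfl | rfl
      · have hij : i ≠ j := fun h => hx2 (by rw [h]; rfl)
        show Multiplicative.toAdd (deltaK t i j) = 0
        rw [deltaK, if_neg (fun h : j = i => hij h.symm)]
        rfl
      · show Multiplicative.toAdd ((1 : Kt t) j) = 0
        rfl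
      · show Multiplicative.toAdd ((1 : Kt t) j) = 0
        rfl
    refine lt_of_le_of_lt hle (lt_top_iff_ne_top.mpr ?_)
    intro htop
    have : kgen t j ∈ N := htop ▸ Subgroup.mem_top _
    rw [mem_MU, ite_self, sub_zero, LinearMap.mem_ker] at this
    have : Multiplicative.toAdd (deltaK t j j) = 0 := this
    rw [deltaK, if_pos rfl] at this
    exact (by decide : ¬ Multiplicative.toAdd (Multiplicative.ofAdd (1 : ZMod 3)) = 0) this
  · -- removing rgen
    set ψ : Gt t →* C2' := (SemidirectProduct.rightHom).comp (MonoidHom.fst _ _) with hψ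
    have hle : Subgroup.closure ((SindF t : Set (Gt t)) \ {rgen t}) ≤ ψ.ker := by
      rw [Subgroup.closure_le]
      intro x hx
      obtain ⟨hx1, hx2⟩ := hx
      rw [SetLike.mem_coe, MonoidHom.mem_ker]
      rcases hmem x hx1 with ⟨i, rfl⟩ | rfl | rfl
      · rfl
      · exact absurd rfl hx2
      · rfl
    refine lt_of_le_of_lt hle (lt_top_iff_ne_top.mpr ?_)
    intro htop
    have : rgen t ∈ ψ.ker := htop ▸ Subgroup.mem_top _
    rw [MonoidHom.mem_ker] at this
    exact ofAdd_one_ne_one this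
  · -- removing zgen
    set ψ : Gt t →* C2' := MonoidHom.snd _ _ with hψ
    have hle : Subgroup.closure ((SindF t : Set (Gt t)) \ {zgen t}) ≤ ψ.ker := by
      rw [Subgroup.closure_le]
      intro x hx
      obtain ⟨hx1, hx2⟩ := hx
      rw [SetLike.mem_coe, MonoidHom.mem_ker]
      rcases hmem x hx1 with ⟨i, rfl⟩ | rfl | rfl
      · rfl
      · rfl
      · exact absurd rfl hx2
    refine lt_of_le_of_lt hle (lt_top_iff_ne_top.mpr ?_)
    intro htop
    have : zgen t ∈ ψ.ker := htop ▸ Subgroup.mem_top _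
    rw [MonoidHom.mem_ker] at this
    exact ofAdd_one_ne_one this

end Indep

theorem gen_dihedral_times_C2 (t : ℕ) (ht : 1 ≤ t) :
    Group.rank
      (((Fin t → Multiplicative (ZMod 3)) ⋊[invAction t] Multiplicative (ZMod 2))
        × Multiplicative (ZMod 2)) = t + 1 ∧
    mGen
      (((Fin t → Multiplicative (ZMod 3)) ⋊[invAction t] Multiplicative (ZMod 2))
        × Multiplicative (ZMod 2)) = t + 2 := by
  constructor
  · apply le_antisymm
    · have h := Group.rank_le (G := Gt t) (SrankF_gen t ht)
      rwa [SrankF_card] at h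
    · show t + 1 ≤ Group.rank (Gt t)
      obtain ⟨S, hcard, hclos⟩ := Group.rank_spec (Gt t)
      have h := gen_card_lower t S hclos
      omega
  · have hbound : ∀ n ∈ {n | ∃ S : Finset (Gt t), IndepGen (S : Set (Gt t)) ∧ S.card = n},
        n ≤ t + 2 := by
      rintro n ⟨S, ⟨hgen, hind⟩, rfl⟩
      have hnot : ∀ s ∈ S, s ∉ Subgroup.closure ((S : Set (Gt t)) \ {s}) := by
        intro s hsS hmem
        have hle : Subgroup.closure ((S : Set (Gt t)))
            ≤ Subgroup.closure ((S : Set (Gt t)) \ {s}) := by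
          rw [Subgroup.closure_le]
          intro x hx
          by_cases hxs : x = s
          · subst hxs
            exact hmem
          · exact Subgroup.subset_closure ⟨hx, hxs⟩
        have h2 := hind s (by exact_mod_cast hsS)
        rw [hgen] at hle
        exact absurd (lt_of_le_of_lt hle h2) (lt_irrefl ⊤)
      have h := indep_card_le S hnot
      rw [hgen, Subgroup.card_top, bigOmega_cardGt] at h
      exact h
    have hmem : t + 2 ∈ {n | ∃ S : Finset (Gt t), IndepGen (S : Set (Gt t)) ∧ S.card = n} :=
      ⟨SindF t, ⟨SindF_gen t, SindF_indep t⟩, SindF_card t⟩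
    apply le_antisymm
    · exact csSup_le ⟨t + 2, hmem⟩ hbound
    · exact le_csSup ⟨t + 2, hbound⟩ hmem
end

section
/- For every normal subgroup N of a finite group G, m(G/N) ≤ m(G), where m(G) denotes the maximal size of an independent generating set of G; i.e., the maximal size of an independent generating set does not increase when passing to quotients. -/
theorem m_quotient_le (G : Type*) [Group G] [Finite G]
    (N : Subgroup G) (hN : N.Normal) :
    mGen (G ⧸ N) ≤ mGen G := by
  classical
  have : Fintype G := Fintype.ofFinite G
  have hbdd : BddAbove {n | ∃ S : Finset G, IndepGen (S : Set G) ∧ S.card = n} :=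
    ⟨Fintype.card G, by rintro n ⟨S, _, rfl⟩; exact Finset.card_le_univ S⟩
  refine csSup_le' ?_
  rintro n ⟨Q, hQ, rfl⟩
  set π : G →* G ⧸ N := QuotientGroup.mk' N with hπ
  have hπsurj : Function.Surjective π := QuotientGroup.mk'_surjective N
  have hπout : ∀ q : G ⧸ N, π (Quotient.out q) = q := by
    intro q
    simp [hπ, QuotientGroup.mk'_apply, QuotientGroup.out_eq']
  set L : Finset G := Q.image Quotient.out with hL
  have hcardL : L.card = Q.card :=
    Finset.card_image_of_injective Q Quotient.out_injective
  have hπL : π '' (L : Set G) = (Q : Set (G ⧸ N)) := by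
    rw [hL, Finset.coe_image, ← Set.image_comp]
    have hco : (π ∘ Quotient.out) = id := funext fun q => hπout q
    rw [hco, Set.image_id]
  -- key : subgroups containing N with full image are all of G
  have key : ∀ H : Subgroup G, N ≤ H → Subgroup.map π H = ⊤ → H = ⊤ := by
    intro H hNH hmap
    have h1 := Subgroup.comap_map_eq π H
    rw [hmap, Subgroup.comap_top, hπ, QuotientGroup.ker_mk'] at h1
    exact top_le_iff.mp (h1.le.trans (sup_le le_rfl hNH))
  set NF : Finset G := (N : Set G).toFinset with hNF
  have hNFmem : ∀ x, x ∈ NF ↔ x ∈ N := by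
    intro x; rw [hNF, Set.mem_toFinset]; rfl
  have hLNF : Subgroup.closure ((L : Set G) ∪ (NF : Set G)) = ⊤ := by
    apply key
    · intro x hx
      exact Subgroup.subset_closure (Or.inr (Finset.mem_coe.mpr ((hNFmem x).mpr hx)))
    · rw [MonoidHom.map_closure, Set.image_union, hπL, eq_top_iff, ← hQ.1]
      exact Subgroup.closure_mono Set.subset_union_left
  -- choose a minimal T ⊆ NF with ⟨L ∪ T⟩ = G
  set P : Finset (Finset G) :=
    NF.powerset.filter (fun T => Subgroup.closure ((L : Set G) ∪ (T : Set G)) = ⊤) with hP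
  have hPne : P.Nonempty := ⟨NF, by
    rw [hP, Finset.mem_filter, Finset.mem_powerset]
    exact ⟨Finset.Subset.refl _, hLNF⟩⟩
  obtain ⟨T, hTP, hTmin⟩ := P.exists_min_image Finset.card hPne
  have hTP' := hTP
  rw [hP, Finset.mem_filter, Finset.mem_powerset] at hTP'
  obtain ⟨hTNF, hTtop⟩ := hTP'
  have hTN : ∀ x ∈ T, x ∈ N := fun x hx => (hNFmem x).mp (hTNF hx)
  -- the independent generating set of G
  refine le_trans ?_ (le_csSup hbdd ⟨L ∪ T, ⟨?_, ?_⟩, rfl⟩)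
  · rw [← hcardL]
    exact Finset.card_le_card Finset.subset_union_left
  · rw [Finset.coe_union]; exact hTtop
  · intro s hs
    by_cases hsL : s ∈ L
    · -- s is a lift of some q ∈ Q
      obtain ⟨q, hqQ, rfl⟩ := Finset.mem_image.mp hsL
      rw [lt_top_iff_ne_top]
      intro htop
      have h2 : Subgroup.closure (π '' ((((L ∪ T) : Finset G) : Set G) \ {Quotient.out q})) = ⊤ := by
        rw [← MonoidHom.map_closure, htop]
        exact Subgroup.map_top_of_surjective _ hπsurj
      have hsub : π '' ((((L ∪ T) : Finset G) : Set G) \ {Quotient.out q}) ⊆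
          (Subgroup.closure ((Q : Set (G ⧸ N)) \ {q}) : Set (G ⧸ N)) := by
        rintro _ ⟨x, ⟨hxS, hxne⟩, rfl⟩
        rcases Finset.mem_union.mp (Finset.mem_coe.mp hxS) with hxL | hxT
        · obtain ⟨q', hq', rfl⟩ := Finset.mem_image.mp hxL
          have hq'ne : q' ≠ q := fun h => hxne (by rw [h]; exact rfl)
          rw [hπout q']
          exact Subgroup.subset_closure ⟨Finset.mem_coe.mpr hq', hq'ne⟩
        · have hx1 : π x = 1 := by
            rw [hπ, QuotientGroup.mk'_apply]
            exact (QuotientGroup.eq_one_iff x).mpr (hTN x hxT)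
          rw [hx1]
          exact Subgroup.one_mem _
      have hle : Subgroup.closure (π '' ((((L ∪ T) : Finset G) : Set G) \ {Quotient.out q})) ≤
          Subgroup.closure ((Q : Set (G ⧸ N)) \ {q}) := (Subgroup.closure_le _).mpr hsub
      rw [h2] at hle
      exact (hQ.2 q (Finset.mem_coe.mpr hqQ)).ne (top_le_iff.mp hle)
    · -- s ∈ T, use minimality
      have hsT : s ∈ T := (Finset.mem_union.mp (Finset.mem_coe.mp hs)).resolve_left hsL
      have hset : (((L ∪ T) : Finset G) : Set G) \ {s} =
          (L : Set G) ∪ ((T.erase s : Finset G) : Set G) := by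
        rw [Finset.coe_union, Set.union_diff_distrib, Finset.coe_erase]
        congr 1
        exact Set.diff_singleton_eq_self (fun h => hsL (Finset.mem_coe.mp h))
      rw [hset, lt_top_iff_ne_top]
      intro htop
      have hmem : T.erase s ∈ P := by
        rw [hP, Finset.mem_filter, Finset.mem_powerset]
        exact ⟨(Finset.erase_subset _ _).trans hTNF, htop⟩
      have h1 := hTmin _ hmem
      have h2 : (T.erase s).card < T.card := Finset.card_erase_lt_of_mem hsT
      omega
end
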